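/- Let $A$ be a compact abelian group, $\gamma:\mathbb{R}\to A$ a continuous homomorphism with dense range, and define on $\mathbb{R}^n\times\mathbb{R}^n\times A$ the multiplication $(p,q,z)(p',q',z')=(p+p',q+q',z\,\gamma(p\cdot q')\,z')$. Then this makes $\mathbb{R}^n\times\mathbb{R}^n\times A$ a topological group, and the map $\tilde\gamma(p,q,t)=(p,q,\gamma(t))$ is a continuous injective group homomorphism from $\mathbb{H}_n$ into it with dense range. -/

import Mathlib

noncomputable section

open Complex MeasureTheory

/-- Underlying data of the polarized Heisenberg group `ℍ_n`. -/
structure Heis (n : ℕ) where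
  p : Fin n → ℝ
  q : Fin n → ℝ
  t : ℝ

/-- The standard dot product on `ℝⁿ`. -/
def dotR {n : ℕ} (x y : Fin n → ℝ) : ℝ := ∑ i, x i * y i

namespace Heis

variable {n : ℕ}

lemma ext' {a b : Heis n} (h1 : a.p = b.p) (h2 : a.q = b.q) (h3 : a.t = b.t) : a = b := by
  cases a; cases b; simp_all

instance : Mul (Heis n) := ⟨fun a b => ⟨a.p + b.p, a.q + b.q, a.t + dotR a.p b.q + b.t⟩⟩
instance : One (Heis n) := ⟨⟨0, 0, 0⟩⟩
instance : Inv (Heis n) := ⟨fun a => ⟨-a.p, -a.q, dotR a.p a.q - a.t⟩⟩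

@[simp] lemma mul_p (a b : Heis n) : (a * b).p = a.p + b.p := rfl
@[simp] lemma mul_q (a b : Heis n) : (a * b).q = a.q + b.q := rfl
@[simp] lemma mul_t (a b : Heis n) : (a * b).t = a.t + dotR a.p b.q + b.t := rfl
@[simp] lemma inv_p (a : Heis n) : (a⁻¹).p = -a.p := rfl
@[simp] lemma inv_q (a : Heis n) : (a⁻¹).q = -a.q := rfl
@[simp] lemma inv_t (a : Heis n) : (a⁻¹).t = dotR a.p a.q - a.t := rfl
@[simp] lemma one_p : (1 : Heis n).p = 0 := rfl
@[simp] lemma one_q : (1 : Heis n).q = 0 := rfl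
@[simp] lemma one_t : (1 : Heis n).t = 0 := rfl

instance : Group (Heis n) where
  mul := (· * ·)
  one := 1
  inv := (·⁻¹)
  mul_assoc a b c := by
    refine ext' ?_ ?_ ?_
    · simp [add_assoc]
    · simp [add_assoc]
    · simp only [mul_t, mul_p, mul_q, dotR, Pi.add_apply, add_mul, mul_add,
        Finset.sum_add_distrib]
      ring
  one_mul a := by
    refine ext' ?_ ?_ ?_ <;> simp [dotR]
  mul_one a := by
    refine ext' ?_ ?_ ?_ <;> simp [dotR]
  inv_mul_cancel a := by
    refine ext' ?_ ?_ ?_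
    · simp
    · simp
    · simp only [mul_t, inv_t, inv_p, one_t, dotR, Pi.neg_apply, neg_mul,
        Finset.sum_neg_distrib]
      ring

instance : TopologicalSpace (Heis n) :=
  TopologicalSpace.induced (fun a => (a.p, a.q, a.t)) inferInstance

end Heis

/-- The partial compactification multiplication on `ℝⁿ × ℝⁿ × A`:
`(p,q,z)(p',q',z') = (p+p', q+q', z γ(p·q') z')`. -/
def partMul {n : ℕ} {A : Type*} [CommGroup A] (γ : ℝ → A)
    (a b : (Fin n → ℝ) × (Fin n → ℝ) × A) : (Fin n → ℝ) × (Fin n → ℝ) × A :=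
  (a.1 + b.1, a.2.1 + b.2.1, a.2.2 * γ (dotR a.1 b.2.1) * b.2.2)

/-- The proposed inverse `(p,q,z)⁻¹ = (-p, -q, γ(p·q) z⁻¹)`. -/
def partInv {n : ℕ} {A : Type*} [CommGroup A] (γ : ℝ → A)
    (a : (Fin n → ℝ) × (Fin n → ℝ) × A) : (Fin n → ℝ) × (Fin n → ℝ) × A :=
  (-a.1, -a.2.1, γ (dotR a.1 a.2.1) * a.2.2⁻¹)

/-!
The twisting term `γ(p·q')` is bimultiplicative in `(p, q')`, because `p·q'` is bilinear and
`γ` is a homomorphism; this gives associativity and inverses exactly as in `ℍ_n`, and makes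
`γ̃` intertwine the two products. As a map `ℝⁿ × ℝⁿ × ℝ → ℝⁿ × ℝⁿ × A`, `γ̃` is `id × id × γ`,
so it inherits continuity, injectivity and density of range from `γ`.
-/

open Matrix

lemma dotR_eq_dotProduct {n : ℕ} (x y : Fin n → ℝ) : dotR x y = x ⬝ᵥ y := rfl

@[fun_prop]
lemma Continuous.dotR {α : Type*} [TopologicalSpace α] {n : ℕ} {f g : α → Fin n → ℝ}
    (hf : Continuous f) (hg : Continuous g) : Continuous fun x => dotR (f x) (g x) :=
  hf.dotProduct hg

section Algebra

variable {n : ℕ} {A : Type*} [CommGroup A] {γ : ℝ → A}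

lemma map_zero_of_map_add (hhom : ∀ s t : ℝ, γ (s + t) = γ s * γ t) : γ 0 = 1 :=
  (mul_eq_left (a := γ 0)).mp (by rw [← hhom, add_zero])

lemma map_neg_of_map_add (hhom : ∀ s t : ℝ, γ (s + t) = γ s * γ t) (t : ℝ) :
    γ (-t) = (γ t)⁻¹ :=
  eq_inv_of_mul_eq_one_left (by rw [← hhom, neg_add_cancel, map_zero_of_map_add hhom])

lemma partMul_assoc (hhom : ∀ s t : ℝ, γ (s + t) = γ s * γ t)
    (a b c : (Fin n → ℝ) × (Fin n → ℝ) × A) :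
    partMul γ (partMul γ a b) c = partMul γ a (partMul γ b c) := by
  simp only [partMul, dotR_eq_dotProduct, add_dotProduct, dotProduct_add, hhom, add_assoc]
  congr 2
  simp only [mul_assoc, mul_left_comm]

lemma partMul_one_left (hhom : ∀ s t : ℝ, γ (s + t) = γ s * γ t)
    (a : (Fin n → ℝ) × (Fin n → ℝ) × A) : partMul γ (0, 0, 1) a = a := by
  simp [partMul, dotR_eq_dotProduct, map_zero_of_map_add hhom]

lemma partMul_one_right (hhom : ∀ s t : ℝ, γ (s + t) = γ s * γ t)
    (a : (Fin n → ℝ) × (Fin n → ℝ) × A) : partMul γ a (0, 0, 1) = a := by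
  simp [partMul, dotR_eq_dotProduct, map_zero_of_map_add hhom]

lemma partMul_partInv (hhom : ∀ s t : ℝ, γ (s + t) = γ s * γ t)
    (a : (Fin n → ℝ) × (Fin n → ℝ) × A) : partMul γ a (partInv γ a) = (0, 0, 1) := by
  simp only [partMul, partInv, dotR_eq_dotProduct, dotProduct_neg, map_neg_of_map_add hhom,
    add_neg_cancel]
  congr 2
  group

end Algebra

section Topology

variable {n : ℕ} {A : Type*} [CommGroup A] [TopologicalSpace A] {γ : ℝ → A}

lemma continuous_partMul [ContinuousMul A] (hcont : Continuous γ) :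
    Continuous fun x : ((Fin n → ℝ) × (Fin n → ℝ) × A) × ((Fin n → ℝ) × (Fin n → ℝ) × A) =>
      partMul γ x.1 x.2 := by
  unfold partMul
  fun_prop

lemma continuous_partInv [ContinuousMul A] [ContinuousInv A] (hcont : Continuous γ) :
    Continuous (partInv γ (n := n)) := by
  unfold partInv
  fun_prop

end Topology

namespace Heis

variable {n : ℕ}

def toProd (g : Heis n) : (Fin n → ℝ) × (Fin n → ℝ) × ℝ := (g.p, g.q, g.t)

lemma continuous_toProd : Continuous (toProd (n := n)) := continuous_induced_dom

lemma injective_toProd : Function.Injective (toProd (n := n)) := fun a b h => by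
  simp only [toProd, Prod.mk.injEq] at h
  exact ext' h.1 h.2.1 h.2.2

lemma surjective_toProd : Function.Surjective (toProd (n := n)) :=
  fun x => ⟨⟨x.1, x.2.1, x.2.2⟩, rfl⟩

end Heis

section Embedding

variable {n : ℕ} {A : Type*} (γ : ℝ → A)

def heisToPartial (g : Heis n) : (Fin n → ℝ) × (Fin n → ℝ) × A := (g.p, g.q, γ g.t)

lemma heisToPartial_eq_prodMap_comp :
    heisToPartial (n := n) γ = Prod.map id (Prod.map id γ) ∘ Heis.toProd := rfl

variable {γ}

lemma heisToPartial_mul [CommGroup A] (hhom : ∀ s t : ℝ, γ (s + t) = γ s * γ t)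
    (g g' : Heis n) :
    heisToPartial γ (g * g') = partMul γ (heisToPartial γ g) (heisToPartial γ g') := by
  simp [heisToPartial, partMul, hhom]

lemma continuous_heisToPartial [TopologicalSpace A] (hcont : Continuous γ) :
    Continuous (heisToPartial (n := n) γ) := by
  rw [heisToPartial_eq_prodMap_comp]
  exact (continuous_id.prodMap (continuous_id.prodMap hcont)).comp Heis.continuous_toProd

lemma injective_heisToPartial (hinj : Function.Injective γ) :
    Function.Injective (heisToPartial (n := n) γ) := by
  rw [heisToPartial_eq_prodMap_comp]
  exact (Function.injective_id.prodMap (Function.injective_id.prodMap hinj)).comp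
    Heis.injective_toProd

lemma denseRange_heisToPartial [TopologicalSpace A] (hcont : Continuous γ)
    (hdense : DenseRange γ) : DenseRange (heisToPartial (n := n) γ) := by
  rw [heisToPartial_eq_prodMap_comp]
  exact (denseRange_id.prodMap (denseRange_id.prodMap hdense)).comp
    Heis.surjective_toProd.denseRange (continuous_id.prodMap (continuous_id.prodMap hcont))

end Embedding

theorem partial_compactification_general (n : ℕ) {A : Type*} [CommGroup A] [TopologicalSpace A]
    [IsTopologicalGroup A]
    (γ : ℝ → A) (hcont : Continuous γ) (hhom : ∀ s t : ℝ, γ (s + t) = γ s * γ t)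
    (hdense : DenseRange γ) (hinj : Function.Injective γ) :
    (∀ a b c : (Fin n → ℝ) × (Fin n → ℝ) × A,
        partMul γ (partMul γ a b) c = partMul γ a (partMul γ b c)) ∧
    (∀ a : (Fin n → ℝ) × (Fin n → ℝ) × A,
        partMul γ ((0 : Fin n → ℝ), (0 : Fin n → ℝ), (1 : A)) a = a ∧
        partMul γ a ((0 : Fin n → ℝ), (0 : Fin n → ℝ), (1 : A)) = a) ∧
    (∀ a : (Fin n → ℝ) × (Fin n → ℝ) × A,
        partMul γ a (partInv γ a) = ((0 : Fin n → ℝ), (0 : Fin n → ℝ), (1 : A))) ∧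
    Continuous (fun x : ((Fin n → ℝ) × (Fin n → ℝ) × A) × ((Fin n → ℝ) × (Fin n → ℝ) × A) =>
        partMul γ x.1 x.2) ∧
    Continuous (partInv γ (n := n)) ∧
    (let γ' : Heis n → (Fin n → ℝ) × (Fin n → ℝ) × A := fun g => (g.p, g.q, γ g.t);
      Continuous γ' ∧ Function.Injective γ' ∧
      (∀ g g' : Heis n, γ' (g * g') = partMul γ (γ' g) (γ' g')) ∧
      DenseRange γ') :=
  ⟨partMul_assoc hhom, fun a => ⟨partMul_one_left hhom a, partMul_one_right hhom a⟩,
    partMul_partInv hhom, continuous_partMul hcont, continuous_partInv hcont,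
    continuous_heisToPartial hcont, injective_heisToPartial hinj, heisToPartial_mul hhom,
    denseRange_heisToPartial hcont hdense⟩

/-- Given a compact abelian group `A` and a continuous injective homomorphism
`γ : ℝ → A` with dense range, the multiplication
`(p,q,z)(p',q',z') = (p+p', q+q', z γ(p·q') z')` makes `ℝⁿ × ℝⁿ × A` a topological group,
and `γ̃(p,q,t) = (p,q,γ(t))` is a continuous injective group homomorphism from `ℍ_n` into
it with dense range. -/
theorem partial_compactification (n : ℕ) {A : Type*} [CommGroup A] [TopologicalSpace A]
    [IsTopologicalGroup A] [CompactSpace A]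
    (γ : ℝ → A) (hcont : Continuous γ) (hhom : ∀ s t : ℝ, γ (s + t) = γ s * γ t)
    (hdense : DenseRange γ) (hinj : Function.Injective γ) :
    (∀ a b c : (Fin n → ℝ) × (Fin n → ℝ) × A,
        partMul γ (partMul γ a b) c = partMul γ a (partMul γ b c)) ∧
    (∀ a : (Fin n → ℝ) × (Fin n → ℝ) × A,
        partMul γ ((0 : Fin n → ℝ), (0 : Fin n → ℝ), (1 : A)) a = a ∧
        partMul γ a ((0 : Fin n → ℝ), (0 : Fin n → ℝ), (1 : A)) = a) ∧
    (∀ a : (Fin n → ℝ) × (Fin n → ℝ) × A,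
        partMul γ a (partInv γ a) = ((0 : Fin n → ℝ), (0 : Fin n → ℝ), (1 : A))) ∧
    Continuous (fun x : ((Fin n → ℝ) × (Fin n → ℝ) × A) × ((Fin n → ℝ) × (Fin n → ℝ) × A) =>
        partMul γ x.1 x.2) ∧
    Continuous (partInv γ (n := n)) ∧
    (let γ' : Heis n → (Fin n → ℝ) × (Fin n → ℝ) × A := fun g => (g.p, g.q, γ g.t);
      Continuous γ' ∧ Function.Injective γ' ∧
      (∀ g g' : Heis n, γ' (g * g') = partMul γ (γ' g) (γ' g')) ∧
      DenseRange γ') :=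
  partial_compactification_general n γ hcont hhom hdense hinj
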